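/- For every ν ∈ (0,1] and every x > 0, the sum of the odd-indexed first-type fractional Poisson probabilities satisfies Σ_{k=0}^∞ x^{2k+1} E_{ν, (2k+1)ν+1}^{2k+2}(-x) = x · E_{ν, ν+1}(-2x). -/

import Mathlib

open Real

/-- The generalized Mittag-Leffler function
`E_{α,β}^γ(x) = Σ_{r=0}^∞ (γ)_r x^r / (r! Γ(αr+β))`. -/
noncomputable def gml (α β γ x : ℝ) : ℝ :=
  ∑' r : ℕ, (∏ i ∈ Finset.range r, (γ + i)) * x ^ r /
    (r.factorial * Real.Gamma (α * r + β))

/-- The two-parameter Mittag-Leffler function `E_{α,β}(x) = Σ_{r=0}^∞ x^r / Γ(αr+β)`. -/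
noncomputable def ml (α β x : ℝ) : ℝ :=
  ∑' r : ℕ, x ^ r / Real.Gamma (α * r + β)

/-!
Write `a n = (-x)^n / Γ(νn+1)`. Since the Pochhammer symbol `(2k+2)_r` equals `r! C(2k+1+r, r)`,
the `k`-th summand on the left is `-Σ_r C(2k+1+r, 2k+1) a(2k+1+r)`. Grouping the terms of this
double series by `n = 2k+1+r` and summing over `k` first produces the odd binomial sums
`Σ_k C(n, 2k+1) = 2^(n-1)`, so the double series equals `-Σ_n 2^n a(n+1) = x E_{ν,ν+1}(-2x)`.
The interchange is legitimate because `Σ_n (2|x|)^n / Γ(νn+1)` converges: `Γ(νn+1) ≥ ⌊νn⌋!`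
outgrows every exponential.
-/

open Finset Filter Topology Nat

theorem Finset.sum_range_two_mul {M : Type*} [AddCommMonoid M] (f : ℕ → M) (m : ℕ) :
    ∑ j ∈ range (2 * m), f j = ∑ k ∈ range m, (f (2 * k) + f (2 * k + 1)) := by
  induction m with
  | zero => simp
  | succ m ih => rw [mul_add_one, sum_range_succ, sum_range_succ, ih, sum_range_succ, add_assoc]

theorem Nat.sum_range_choose_odd (n : ℕ) :
    ∑ k ∈ range (n + 1), (n + 1).choose (2 * k + 1) = 2 ^ n := by
  have hvanish : ∑ i ∈ range (n + 1), n.choose (n + 1 + i) = 0 :=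
    sum_eq_zero fun i _ => choose_eq_zero_of_lt (by omega)
  calc ∑ k ∈ range (n + 1), (n + 1).choose (2 * k + 1)
      = ∑ k ∈ range (n + 1), (n.choose (2 * k) + n.choose (2 * k + 1)) := by
        simp only [choose_succ_succ']
    _ = ∑ j ∈ range (2 * (n + 1)), n.choose j := (sum_range_two_mul _ _).symm
    _ = 2 ^ n := by rw [two_mul, sum_range_add, hvanish, add_zero, sum_range_choose]

theorem Nat.sum_range_choose_odd_le (n : ℕ) : ∑ k ∈ range n, n.choose (2 * k + 1) ≤ 2 ^ n := by
  cases n with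
  | zero => simp
  | succ n => rw [sum_range_choose_odd, pow_succ]; omega

theorem tsum_choose_odd_smul {M : Type*} [AddCommMonoid M] [TopologicalSpace M] (n : ℕ) (m : M) :
    ∑' k, n.choose (2 * k + 1) • m = (∑ k ∈ range n, n.choose (2 * k + 1)) • m := by
  rw [tsum_eq_sum fun k hk => ?_, sum_smul]
  rw [choose_eq_zero_of_lt (by simp only [mem_range, not_lt] at hk; omega), zero_smul]

theorem tsum_tsum_choose_odd_smul {E : Type*} [NormedAddCommGroup E] [CompleteSpace E]
    (b : ℕ → E) (hb : Summable fun n => 2 ^ n * ‖b n‖) :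
    ∑' k, ∑' r, (2 * k + 1 + r).choose (2 * k + 1) • b (2 * k + 1 + r)
      = ∑' n, 2 ^ n • b (n + 1) := by
  let G : ℕ → ℕ → E := fun n k => n.choose (2 * k + 1) • b n
  have hrow (k : ℕ) :
      ∑' r, (2 * k + 1 + r).choose (2 * k + 1) • b (2 * k + 1 + r) = ∑' n, G n k := by
    refine (add_right_injective (2 * k + 1)).tsum_eq (f := fun n => G n k)
      fun n hn => ⟨n - (2 * k + 1), ?_⟩
    have : 2 * k + 1 ≤ n := by
      by_contra h
      exact hn (by simp only [G, choose_eq_zero_of_lt (not_le.1 h), zero_smul])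
    simp only; omega
  have hG : Summable (Function.uncurry G) := by
    have hH : Summable fun p : ℕ × ℕ => p.1.choose (2 * p.2 + 1) • ‖b p.1‖ := by
      refine (summable_prod_of_nonneg fun p => by positivity).2
        ⟨fun n => summable_of_ne_finset_zero (s := range n) fun k hk => ?_, ?_⟩
      · have : n < 2 * k + 1 := by simp only [mem_range, not_lt] at hk; omega
        simp only [choose_eq_zero_of_lt this, zero_smul]
      · refine hb.of_nonneg_of_le (fun n => tsum_nonneg fun k => by positivity) fun n => ?_
        change ∑' k, n.choose (2 * k + 1) • ‖b n‖ ≤ _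
        rw [tsum_choose_odd_smul, nsmul_eq_mul]
        gcongr
        exact_mod_cast sum_range_choose_odd_le n
    exact hH.of_norm_bounded fun p => norm_nsmul_le.trans_eq (nsmul_eq_mul _ _).symm
  calc ∑' k, ∑' r, (2 * k + 1 + r).choose (2 * k + 1) • b (2 * k + 1 + r)
      = ∑' k, ∑' n, G n k := tsum_congr hrow
    _ = ∑' n, (∑ k ∈ range n, n.choose (2 * k + 1)) • b n := by
      rw [hG.tsum_comm]; exact tsum_congr fun n => tsum_choose_odd_smul n (b n)
    _ = ∑' n, 2 ^ n • b (n + 1) := by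
      simp only [← sum_range_choose_odd]
      refine ((add_left_injective 1).tsum_eq
        (f := fun n => (∑ k ∈ range n, n.choose (2 * k + 1)) • b n) fun n hn => ⟨n - 1, by
        have : n ≠ 0 := by rintro rfl; simp at hn
        simp only; omega⟩).symm

theorem Real.eventually_pow_le_Gamma {ν : ℝ} (hν : 0 < ν) (c : ℝ) :
    ∀ᶠ n : ℕ in atTop, c ^ n ≤ Gamma (ν * n + 1) := by
  set A := max 1 |c|
  set C := A ^ ν⁻¹
  have hA : 0 ≤ A := zero_le_one.trans (le_max_left _ _)
  have hC : 1 ≤ C := one_le_rpow (le_max_left _ _) (inv_nonneg.2 hν.le)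
  have hfloor : Tendsto (fun n : ℕ => ⌊ν * n⌋₊) atTop atTop :=
    tendsto_nat_floor_atTop.comp (tendsto_natCast_atTop_atTop.const_mul_atTop hν)
  have hfact : ∀ᶠ m : ℕ in atTop, 1 ≤ m ∧ C ^ (m + 1) ≤ m ! := by
    filter_upwards [eventually_ge_atTop 1,
      (FloorSemiring.tendsto_pow_div_factorial_atTop C).eventually
        (gt_mem_nhds (inv_pos.2 (zero_lt_one.trans_le hC)))] with m hm hlt
    refine ⟨hm, ?_⟩
    rw [div_lt_iff₀ (by positivity)] at hlt
    calc C ^ (m + 1) = C ^ m * C := pow_succ _ _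
      _ ≤ C⁻¹ * m ! * C := by gcongr
      _ = m ! := by field_simp
  filter_upwards [hfloor.eventually hfact] with n ⟨hm1, hm⟩
  set m := ⌊ν * n⌋₊
  have hνn : 0 ≤ ν * n := by positivity
  calc c ^ n ≤ A ^ n := (le_abs_self _).trans <| by
        rw [abs_pow]; exact pow_le_pow_left₀ (abs_nonneg c) (le_max_right _ _) n
    _ = C ^ (ν * n) := by
        rw [← rpow_mul hA, inv_mul_cancel_left₀ hν.ne', rpow_natCast]
    _ ≤ C ^ ((m + 1 : ℕ) : ℝ) := by
        refine rpow_le_rpow_of_exponent_le hC ?_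
        push_cast; exact (lt_floor_add_one _).le
    _ ≤ m ! := by rwa [rpow_natCast]
    _ = Gamma (m + 1) := (Gamma_nat_eq_factorial m).symm
    _ ≤ Gamma (ν * n + 1) := by
        have : (1 : ℝ) ≤ m := by exact_mod_cast hm1
        have hmν : (m : ℝ) ≤ ν * n := floor_le hνn
        exact Gamma_strictMonoOn_Ici.monotoneOn (by simp only [Set.mem_Ici]; linarith)
          (by simp only [Set.mem_Ici]; linarith) (by linarith)

theorem Real.summable_pow_div_Gamma {ν : ℝ} (hν : 0 < ν) (y : ℝ) :
    Summable fun n : ℕ => y ^ n / Gamma (ν * n + 1) := by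
  refine .of_norm_bounded_eventually_nat summable_geometric_two ?_
  filter_upwards [eventually_pow_le_Gamma hν (2 * |y|)] with n hn
  have hΓ : 0 < Gamma (ν * n + 1) := Gamma_pos_of_pos (by positivity)
  rw [norm_div, norm_pow, norm_eq_abs, norm_eq_abs, abs_of_pos hΓ, div_le_iff₀ hΓ]
  calc |y| ^ n = (1 / 2) ^ n * (2 * |y|) ^ n := by rw [← mul_pow]; ring_nf
    _ ≤ (1 / 2) ^ n * Gamma (ν * n + 1) := by gcongr

theorem prod_range_add_one_add_eq_factorial_mul_choose {R : Type*} [CommSemiring R] (m r : ℕ) :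
    ∏ i ∈ range r, ((m : R) + 1 + i) = r ! * (m + r).choose r := by
  have h := ascFactorial_eq_prod_range (m + 1) r
  rw [ascFactorial_eq_factorial_mul_choose] at h
  simpa using congrArg (Nat.cast : ℕ → R) h.symm

theorem pow_mul_gml_odd (ν x : ℝ) (k : ℕ) :
    x ^ (2 * k + 1) * gml ν ((2 * k + 1) * ν + 1) (2 * k + 2) (-x)
      = -∑' r : ℕ, (2 * k + 1 + r).choose (2 * k + 1) •
          ((-x) ^ (2 * k + 1 + r) / Gamma (ν * ↑(2 * k + 1 + r) + 1)) := by
  rw [gml, ← tsum_mul_left, ← tsum_neg]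
  refine tsum_congr fun r => ?_
  have hprod := prod_range_add_one_add_eq_factorial_mul_choose (R := ℝ) (2 * k + 1) r
  push_cast at hprod ⊢
  rw [show (2 * k + 2 : ℝ) = 2 * k + 1 + 1 by ring, hprod, ← choose_symm_add,
    show ν * r + ((2 * k + 1) * ν + 1) = ν * (2 * k + 1 + r) + 1 by ring,
    nsmul_eq_mul, pow_add (-x), Odd.neg_pow ⟨k, rfl⟩]
  field_simp

theorem mul_ml_neg_two_mul (ν x : ℝ) :
    x * ml ν (ν + 1) (-(2 * x))
      = -∑' n : ℕ, 2 ^ n • ((-x) ^ (n + 1) / Gamma (ν * ↑(n + 1) + 1)) := by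
  rw [ml, ← tsum_mul_left, ← tsum_neg]
  refine tsum_congr fun n => ?_
  rw [nsmul_eq_mul, Nat.cast_pow, Nat.cast_ofNat, Nat.cast_succ,
    show ν * (n + 1) + 1 = ν * n + (ν + 1) by ring, neg_pow (2 * x), neg_pow x]
  ring

theorem odd_probabilities_sum_general (ν x : ℝ) (hν : 0 < ν) :
    ∑' k : ℕ, x ^ (2 * k + 1) * gml ν ((2 * k + 1) * ν + 1) (2 * k + 2) (-x)
      = x * ml ν (ν + 1) (-(2 * x)) := by
  simp_rw [pow_mul_gml_odd, mul_ml_neg_two_mul, tsum_neg]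
  congr 1
  refine tsum_tsum_choose_odd_smul (fun n => (-x) ^ n / Gamma (ν * n + 1)) ?_
  refine (summable_pow_div_Gamma hν (2 * |x|)).congr fun n => ?_
  have hΓ : 0 < Gamma (ν * n + 1) := Gamma_pos_of_pos (by positivity)
  rw [norm_div, norm_pow, norm_neg, norm_eq_abs, norm_eq_abs, abs_of_pos hΓ, mul_pow,
    mul_div_assoc]

/-- For `ν ∈ (0,1]` and `x > 0`:
`Σ_{k=0}^∞ x^{2k+1} E_{ν,(2k+1)ν+1}^{2k+2}(-x) = x E_{ν,ν+1}(-2x)`. -/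
theorem odd_probabilities_sum (ν x : ℝ) (hν : 0 < ν) (hν1 : ν ≤ 1) (hx : 0 < x) :
    ∑' k : ℕ, x ^ (2 * k + 1) * gml ν ((2 * k + 1) * ν + 1) (2 * k + 2) (-x)
      = x * ml ν (ν + 1) (-(2 * x)) :=
  odd_probabilities_sum_general ν x hν
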